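/- Let δ, γ be nonzero ordinals, τ an ordinal, and Σ = ⟨S_β : β < τ⟩ a partition of δ*. Every member of I^{Σ,γ} can be written as a union of a finite family of pairwise disjoint basic sets, and this family of pairwise disjoint basic sets is unique: if E and E' are finite sets of pairwise disjoint basic sets with ⋃E = ⋃E', then E = E'. -/

import Mathlib

/-!
Compare sequences through `key`, which turns `Llt` into the lexicographic order of `ℕ → _` in
which the end of a sequence sits between its negative and its positive continuations; the
extensions of a fixed sequence then form an interval. Hence any two basic sets are nested or
disjoint (for `J_x`, `J_y` with `x↾ < y↾ < x < y`, where `x↾ = x.dropLast`, `x` would extend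
`y↾` by a positive entry), so the maximal members of a finite family of basic sets are pairwise
disjoint with the same union.

Uniqueness rests on this: no basic set `B` is the disjoint union of finitely many basic proper
subsets. Such a decomposition would contain a singleton piece `{p}` followed by further points of
`B`: `p = ⟨β⟩` after an initial-segment piece `L_β`, or, for `B = J_x`, either `p = x↾` or the
point `p = y` right after a piece `J_y` with `y↾ = x↾`. Every piece has a least element above `p`,
yet `z ↦ z⁀⟨0*⟩` moves down while staying above `p`, `0*` being the largest negative value.
Given two disjoint decompositions with the same union, members of the two that meet are nested,
and the larger one would be split by members of its own family; so they coincide.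
-/

open Ordinal Cardinal

abbrev SOrd : Type 1 := Ordinalᵒᵈ ⊕ₗ Ordinal

namespace SOrd
def neg (α : Ordinal) : SOrd := toLex (Sum.inl (OrderDual.toDual α))
def pos (α : Ordinal) : SOrd := toLex (Sum.inr α)
def IsPos (a : SOrd) : Prop := ∃ α : Ordinal, a = pos α
def val (a : SOrd) : Ordinal := Sum.elim (fun b => OrderDual.ofDual b) id (ofLex a)
end SOrd

def IsBetween (δ : Ordinal) (a : SOrd) : Prop := SOrd.neg δ < a ∧ a < SOrd.pos δ

def Lset (δ γ : Ordinal) : Set (List SOrd) :=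
  {x | x ≠ [] ∧ (∃ h : 0 < x.length, ∃ α < γ, x[0]'h = SOrd.pos α) ∧
    ∀ k, ∀ h : k < x.length, 0 < k → IsBetween δ (x[k]'h)}

def Llt (x y : List SOrd) : Prop :=
  (∃ k, ∃ hx : k < x.length, ∃ hy : k < y.length,
      x.take k = y.take k ∧ x[k]'hx < y[k]'hy) ∨
  (∃ hy : x.length < y.length, y.take x.length = x ∧ SOrd.IsPos (y[x.length]'hy)) ∨
  (∃ hx : y.length < x.length, x.take y.length = y ∧ ¬ SOrd.IsPos (x[y.length]'hx))

/-- `S` (as the indexed family `⟨S β : β < τ⟩`, where each `ξ ∈ S β` codes the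
negative ordinal `ξ*`) is a partition of `δ*`. -/
def IsPartition (δ τ : Ordinal) (S : Ordinal → Set Ordinal) : Prop :=
  (∀ β, S β ⊆ Set.Iio δ) ∧ (∀ β, τ ≤ β → S β = ∅) ∧ (∀ ξ, ξ < δ → ∃! β, ξ ∈ S β)

/-- `β^Σ(ξ*)`: the index of the piece of the partition containing `ξ*`. -/
noncomputable def colorOf (S : Ordinal → Set Ordinal) (ξ : Ordinal) : Ordinal :=
  sInf {β | ξ ∈ S β}

/-- The index set `r_x`. -/
def rIdx (τ : Ordinal) (x : List SOrd) : Set ℕ :=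
  {i | ∃ h : i < x.length, 2 ≤ i ∧ i % 2 = 0 ∧ x[i]'h < SOrd.pos τ}

/-- `Σ`-relevant sequences. -/
def Relevant (δ γ τ : Ordinal) (S : Ordinal → Set Ordinal) (x : List SOrd) : Prop :=
  x ∈ Lset δ γ ∧ 3 ≤ x.length ∧ x.length % 2 = 1 ∧
  (∀ i, ∀ h : i < x.length, (SOrd.IsPos (x[i]'h) ↔ i % 2 = 0)) ∧
  (∀ i ∈ rIdx τ x, ∀ j ∈ rIdx τ x, i < j →
    ∀ (hi : i - 1 < x.length) (hj : j - 1 < x.length),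
      colorOf S (x[j-1]'hj).val < colorOf S (x[i-1]'hi).val) ∧
  x.length - 1 ∈ rIdx τ x

/-- `J^{Σ,γ}_x = {z ∈ L^{δ,γ} : x↾(|x|-1) ≤ z < x}`. -/
def Jset (δ γ : Ordinal) (x : List SOrd) : Set (List SOrd) :=
  {z ∈ Lset δ γ | (z = x.take (x.length - 1) ∨ Llt (x.take (x.length - 1)) z) ∧ Llt z x}

/-- The initial segment `L^{δ,γ}_α = {z : z < ⟨α⟩}` (equal to `L^{δ,γ}` when `α = γ`). -/
def Lbelow (δ γ α : Ordinal) : Set (List SOrd) :=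
  {z ∈ Lset δ γ | Llt z [SOrd.pos α]}

/-- `L^{δ,γ}_x = {z ∈ L^{δ,γ} : z < x}`. -/
def Lx (δ γ : Ordinal) (x : List SOrd) : Set (List SOrd) :=
  {z ∈ Lset δ γ | Llt z x}

/-- The basic sets of `I^{Σ,γ}`. -/
def IsBasic (δ γ τ : Ordinal) (S : Ordinal → Set Ordinal) (B : Set (List SOrd)) : Prop :=
  (∃ α ≤ γ, B = Lbelow δ γ α) ∨
  (∃ x, Relevant δ γ τ S x ∧ B = Jset δ γ x) ∨
  (∃ z ∈ Lset δ γ, B = ({z} : Set (List SOrd)))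

/-- `I^{Σ,γ}`: finite unions of basic sets. -/
def Ifam (δ γ τ : Ordinal) (S : Ordinal → Set Ordinal) : Set (Set (List SOrd)) :=
  {A | ∃ E : Finset (Set (List SOrd)), (∀ B ∈ E, IsBasic δ γ τ S B) ∧
    A = ⋃ B ∈ E, (B : Set (List SOrd))}

/-- `I^{Σ,γ}_x = {A ⊆ L^{δ,γ}_x : A ∈ I^{Σ,γ}}`. -/
def Ix (δ γ τ : Ordinal) (S : Ordinal → Set Ordinal) (x : List SOrd) : Set (Set (List SOrd)) :=
  {A | A ⊆ Lx δ γ x ∧ A ∈ Ifam δ γ τ S}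


theorem List.take_eq_take_of_getElem? {α : Type*} {x y : List α} {i : ℕ}
    (h : ∀ j < i, x[j]? = y[j]?) : x.take i = y.take i :=
  List.ext_getElem? fun j => by
    simp only [List.getElem?_take]
    split_ifs with hj
    exacts [h j hj, rfl]

theorem List.length_eq_of_getElem?_eq_none {α : Type*} {x y : List α} {i : ℕ}
    (h : ∀ j < i, x[j]? = y[j]?) (hx : x[i]? = none) (hy : i < y.length) : x.length = i := by
  refine le_antisymm (List.getElem?_eq_none_iff.1 hx) (not_lt.1 fun hlt => ?_)
  have := h x.length hlt
  rw [List.getElem?_eq_none le_rfl, List.getElem?_eq_getElem (hlt.trans hy)] at this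
  exact Option.some_ne_none _ this.symm

section LaminarFamily

variable {α : Type*} {P : Set α → Prop}

theorem exists_pairwise_disjoint_subfamily_of_laminar
    (hlam : ∀ ⦃B C⦄, P B → P C → B ⊆ C ∨ C ⊆ B ∨ Disjoint B C)
    (E : Finset (Set α)) (hE : ∀ B ∈ E, P B) :
    ∃ E' ⊆ E, (E' : Set (Set α)).Pairwise Disjoint ∧ ⋃ B ∈ E', B = ⋃ B ∈ E, B := by
  classical
  refine ⟨E.filter (Maximal (· ∈ E)), Finset.filter_subset _ _, ?_, ?_⟩
  · intro B hB C hC hne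
    simp only [Finset.coe_filter, Set.mem_ofPred_eq] at hB hC
    rcases hlam (hE B hB.1) (hE C hC.1) with h | h | h
    · exact absurd (le_antisymm h (hB.2.2 hC.1 h)) hne
    · exact absurd (le_antisymm (hC.2.2 hB.1 h) h) hne
    · exact h
  refine subset_antisymm
    (Set.biUnion_subset_biUnion_left (Finset.coe_subset.2 (Finset.filter_subset _ _)))
    (Set.iUnion₂_subset fun B hB => ?_)
  obtain ⟨C, hBC, hC⟩ := E.exists_le_maximal hB
  exact hBC.trans (Set.subset_biUnion_of_mem (u := id) (by simpa using ⟨hC.1, hC⟩))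

/-- Otherwise the members of `E` meeting `C` would split `C` into proper pieces. -/
theorem eq_of_subset_of_subset_biUnion
    (hlam : ∀ ⦃B C⦄, P B → P C → B ⊆ C ∨ C ⊆ B ∨ Disjoint B C)
    (hsplit : ∀ ⦃B⦄, P B → ∀ F : Finset (Set α), (∀ C ∈ F, P C) →
      (F : Set (Set α)).Pairwise Disjoint → (∀ C ∈ F, C ⊂ B) → B ≠ ⋃ C ∈ F, C)
    {E : Finset (Set α)} (hE : ∀ B ∈ E, P B) (hdE : (E : Set (Set α)).Pairwise Disjoint)
    {B C : Set α} (hB : B ∈ E) (hC : P C) (hBC : B ⊆ C) (hBne : B.Nonempty)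
    (hCE : C ⊆ ⋃ D ∈ E, D) : B = C := by
  classical
  by_contra hne
  have not_subset : ∀ D ∈ E, B ≠ D → ¬ B ⊆ D := fun D hD hBD hsub =>
    hBne.ne_empty (disjoint_self.1 ((hdE hB hD hBD).mono_right hsub))
  set F := E.filter fun D => (C ∩ D).Nonempty
  have hF : ∀ D ∈ F, D ⊂ C := by
    intro D hD
    obtain ⟨hDE, hCD⟩ := Finset.mem_filter.1 hD
    rcases hlam (hE D hDE) hC with h | h | h
    · refine h.ssubset_of_ne fun hDC => ?_
      subst hDC
      exact not_subset D hDE hne hBC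
    · exact absurd (hBC.trans h)
        (not_subset D hDE fun hBD => hne (hBC.antisymm (hBD ▸ h)))
    · exact absurd h.symm (Set.not_disjoint_iff_nonempty_inter.2 hCD)
  refine hsplit hC F (fun D hD => hE D (Finset.mem_of_mem_filter D hD))
    (hdE.mono (Finset.coe_subset.2 (Finset.filter_subset _ _))) hF
    (subset_antisymm (fun z hz => ?_) (Set.iUnion₂_subset fun D hD => (hF D hD).subset))
  obtain ⟨D, hD, hzD⟩ := Set.mem_iUnion₂.1 (hCE hz)
  exact Set.mem_biUnion (Finset.mem_filter.2 ⟨hD, z, hz, hzD⟩) hzD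

theorem subset_of_biUnion_eq_of_laminar
    (hlam : ∀ ⦃B C⦄, P B → P C → B ⊆ C ∨ C ⊆ B ∨ Disjoint B C)
    (hsplit : ∀ ⦃B⦄, P B → ∀ F : Finset (Set α), (∀ C ∈ F, P C) →
      (F : Set (Set α)).Pairwise Disjoint → (∀ C ∈ F, C ⊂ B) → B ≠ ⋃ C ∈ F, C)
    {E E' : Finset (Set α)} (hE : ∀ B ∈ E, P B) (hdE : (E : Set (Set α)).Pairwise Disjoint)
    (hE' : ∀ B ∈ E', P B) (hdE' : (E' : Set (Set α)).Pairwise Disjoint)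
    (h : ⋃ B ∈ E, B = ⋃ B ∈ E', B) : E ⊆ E' := by
  intro B hB
  obtain ⟨z, hz⟩ : B.Nonempty := Set.nonempty_iff_ne_empty.2 fun h0 =>
    hsplit (hE B hB) ∅ (by simp) (by simp) (by simp) (by simp [h0])
  obtain ⟨C, hC, hzC⟩ := Set.mem_iUnion₂.1 (h ▸ Set.mem_biUnion hB hz)
  rcases hlam (hE B hB) (hE' C hC) with hBC | hCB | hd
  · rwa [eq_of_subset_of_subset_biUnion hlam hsplit hE hdE hB (hE' C hC) hBC ⟨z, hz⟩
      (h ▸ Set.subset_biUnion_of_mem (u := id) hC)]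
  · rwa [← eq_of_subset_of_subset_biUnion hlam hsplit hE' hdE' hC (hE B hB) hCB ⟨z, hzC⟩
      (h ▸ Set.subset_biUnion_of_mem (u := id) hB)]
  · exact absurd hd (Set.not_disjoint_iff.2 ⟨z, hz, hzC⟩)

theorem eq_of_biUnion_eq_of_laminar
    (hlam : ∀ ⦃B C⦄, P B → P C → B ⊆ C ∨ C ⊆ B ∨ Disjoint B C)
    (hsplit : ∀ ⦃B⦄, P B → ∀ F : Finset (Set α), (∀ C ∈ F, P C) →
      (F : Set (Set α)).Pairwise Disjoint → (∀ C ∈ F, C ⊂ B) → B ≠ ⋃ C ∈ F, C)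
    {E E' : Finset (Set α)} (hE : ∀ B ∈ E, P B) (hdE : (E : Set (Set α)).Pairwise Disjoint)
    (hE' : ∀ B ∈ E', P B) (hdE' : (E' : Set (Set α)).Pairwise Disjoint)
    (h : ⋃ B ∈ E, B = ⋃ B ∈ E', B) : E = E' :=
  (subset_of_biUnion_eq_of_laminar hlam hsplit hE hdE hE' hdE' h).antisymm
    (subset_of_biUnion_eq_of_laminar hlam hsplit hE' hdE' hE hdE h.symm)

end LaminarFamily

theorem exists_forall_le_of_finite_cover {α β : Type*} [LinearOrder β] (f : α → β)
    (F : Finset (Set α)) {G : Set α} (hG : G.Nonempty) (hcov : G ⊆ ⋃ P ∈ F, P)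
    (hmin : ∀ P ∈ F, (G ∩ P).Nonempty → ∃ m ∈ G ∩ P, ∀ q ∈ G ∩ P, f m ≤ f q) :
    ∃ m ∈ G, ∀ q ∈ G, f m ≤ f q := by
  classical
  obtain ⟨z, hz⟩ := hG
  have : Nonempty α := ⟨z⟩
  choose! m hmG hm using hmin
  set F' := F.filter fun P => (G ∩ P).Nonempty
  have mem_F' : ∀ q ∈ G, ∃ Q ∈ F', q ∈ Q := fun q hq => by
    obtain ⟨Q, hQ, hqQ⟩ := Set.mem_iUnion₂.1 (hcov hq)
    exact ⟨Q, Finset.mem_filter.2 ⟨hQ, q, hq, hqQ⟩, hqQ⟩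
  obtain ⟨P₀, hP₀, -⟩ := mem_F' z hz
  obtain ⟨P, hP, hPmin⟩ := F'.exists_min_image (f ∘ m) ⟨P₀, hP₀⟩
  obtain ⟨hPF, hPne⟩ := Finset.mem_filter.1 hP
  refine ⟨m P, (hmG P hPF hPne).1, fun q hq => ?_⟩
  obtain ⟨Q, hQ, hqQ⟩ := mem_F' q hq
  exact (hPmin Q hQ).trans (hm Q (Finset.mem_filter.1 hQ).1 ⟨q, hq, hqQ⟩ q ⟨hq, hqQ⟩)

namespace SOrd

theorem pos_lt_pos_iff {α β : Ordinal} : pos α < pos β ↔ α < β := Sum.Lex.inr_lt_inr_iff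

theorem neg_lt_neg_iff {α β : Ordinal} : neg α < neg β ↔ β < α := Sum.Lex.inl_lt_inl_iff

theorem neg_lt_pos (α β : Ordinal) : neg α < pos β := Sum.Lex.inl_lt_inr _ _

theorem isPos_pos (α : Ordinal) : IsPos (pos α) := ⟨α, rfl⟩

theorem not_isPos_neg (α : Ordinal) : ¬ IsPos (neg α) := by
  rintro ⟨β, h⟩
  exact Sum.inl_ne_inr h

theorem exists_eq_pos_or_exists_eq_neg (a : SOrd) : (∃ α, a = pos α) ∨ ∃ ξ, a = neg ξ := by
  rcases a with ξ | α
  · exact .inr ⟨OrderDual.ofDual ξ, rfl⟩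
  · exact .inl ⟨α, rfl⟩

theorem exists_eq_neg_of_not_isPos {a : SOrd} (h : ¬ IsPos a) : ∃ ξ, a = neg ξ :=
  (exists_eq_pos_or_exists_eq_neg a).resolve_left h

/-- A sequence read at some position, where reading past the end gives a value strictly between
the negative and the positive entries: this is how `Llt` compares a sequence with its
extensions. -/
def slot : Option SOrd → Ordinalᵒᵈ ⊕ₗ WithBot Ordinal
  | none => toLex (Sum.inr ⊥)
  | some a => toLex (Sum.elim Sum.inl (Sum.inr ∘ WithBot.some) (ofLex a))

theorem slot_none : slot none = toLex (Sum.inr ⊥) := rfl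

@[simp] theorem slot_some_pos (α : Ordinal) : slot (some (pos α)) = toLex (Sum.inr ↑α) := rfl

@[simp] theorem slot_some_neg (ξ : Ordinal) :
    slot (some (neg ξ)) = toLex (Sum.inl (OrderDual.toDual ξ)) := rfl

theorem slot_injective : Function.Injective slot := by
  rintro (_ | a) (_ | b) h
  all_goals
    (try rcases exists_eq_pos_or_exists_eq_neg a with ⟨a, rfl⟩ | ⟨a, rfl⟩) <;>
    (try rcases exists_eq_pos_or_exists_eq_neg b with ⟨b, rfl⟩ | ⟨b, rfl⟩) <;>
    simp_all [slot_none]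

theorem slot_some_lt_slot_some {a b : SOrd} : slot (some a) < slot (some b) ↔ a < b := by
  rcases exists_eq_pos_or_exists_eq_neg a with ⟨a, rfl⟩ | ⟨a, rfl⟩ <;>
  rcases exists_eq_pos_or_exists_eq_neg b with ⟨b, rfl⟩ | ⟨b, rfl⟩ <;>
  simp [pos_lt_pos_iff, neg_lt_neg_iff, neg_lt_pos, (neg_lt_pos _ _).not_gt]

theorem slot_none_lt_slot_some {a : SOrd} : slot none < slot (some a) ↔ IsPos a := by
  rcases exists_eq_pos_or_exists_eq_neg a with ⟨a, rfl⟩ | ⟨a, rfl⟩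
  · simp [slot_none, isPos_pos]
  · simp [slot_none, not_isPos_neg]

theorem slot_some_lt_slot_none {a : SOrd} : slot (some a) < slot none ↔ ¬ IsPos a := by
  rcases exists_eq_pos_or_exists_eq_neg a with ⟨a, rfl⟩ | ⟨a, rfl⟩
  · simp [slot_none, isPos_pos]
  · simp [slot_none, not_isPos_neg]

end SOrd

open SOrd

/-- Transports `Llt` to the lexicographic order of `ℕ → _`, a linear order
(see `llt_iff_key_lt`). -/
def key (x : List SOrd) : Lex (ℕ → Ordinalᵒᵈ ⊕ₗ WithBot Ordinal) :=
  toLex fun k => slot x[k]?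

theorem key_injective : Function.Injective key := fun _ _ h =>
  List.ext_getElem? fun k => slot_injective (congrFun h k)

theorem key_lt_key_iff {x y : List SOrd} :
    key x < key y ↔ ∃ i : ℕ, (∀ j < i, x[j]? = y[j]?) ∧ slot x[i]? < slot y[i]? :=
  exists_congr fun _ => and_congr_left' <| forall₂_congr fun _ _ => slot_injective.eq_iff

theorem llt_iff_key_lt {x y : List SOrd} : Llt x y ↔ key x < key y := by
  rw [key_lt_key_iff]
  constructor
  · rintro (⟨k, hx, hy, htake, hlt⟩ | ⟨hy, htake, hpos⟩ | ⟨hx, htake, hneg⟩)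
    · refine ⟨k, fun j hj => ?_, ?_⟩
      · simpa [List.getElem?_take, hj] using congrArg (·[j]?) htake
      · simpa [List.getElem?_eq_getElem hx, List.getElem?_eq_getElem hy,
          slot_some_lt_slot_some] using hlt
    · refine ⟨x.length, fun j hj => ?_, ?_⟩
      · simpa [List.getElem?_take, hj] using (congrArg (·[j]?) htake).symm
      · simpa [List.getElem?_eq_getElem hy, slot_none_lt_slot_some] using hpos
    · refine ⟨y.length, fun j hj => ?_, ?_⟩
      · simpa [List.getElem?_take, hj] using congrArg (·[j]?) htake
      · simpa [List.getElem?_eq_getElem hx, slot_some_lt_slot_none] using hneg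
  · rintro ⟨i, hpre, hlt⟩
    rcases hx : x[i]? with _ | a <;> rcases hy : y[i]? with _ | b <;> rw [hx, hy] at hlt
    · exact absurd hlt (lt_irrefl _)
    · obtain ⟨hyi, rfl⟩ := List.getElem?_eq_some_iff.1 hy
      obtain rfl := List.length_eq_of_getElem?_eq_none hpre hx hyi
      refine .inr (.inl ⟨hyi, ?_, slot_none_lt_slot_some.1 hlt⟩)
      rw [← List.take_eq_take_of_getElem? hpre, List.take_length]
    · obtain ⟨hxi, rfl⟩ := List.getElem?_eq_some_iff.1 hx
      obtain rfl := List.length_eq_of_getElem?_eq_none (fun j hj => (hpre j hj).symm) hy hxi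
      refine .inr (.inr ⟨hxi, ?_, slot_some_lt_slot_none.1 hlt⟩)
      rw [List.take_eq_take_of_getElem? hpre, List.take_length]
    · obtain ⟨hxi, rfl⟩ := List.getElem?_eq_some_iff.1 hx
      obtain ⟨hyi, rfl⟩ := List.getElem?_eq_some_iff.1 hy
      exact .inl ⟨i, hxi, hyi, List.take_eq_take_of_getElem? hpre, slot_some_lt_slot_some.1 hlt⟩

theorem key_lt_of_getElem? {x y : List SOrd} (i : ℕ) (h : ∀ j < i, x[j]? = y[j]?)
    (hi : slot x[i]? < slot y[i]?) : key x < key y :=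
  key_lt_key_iff.2 ⟨i, h, hi⟩

theorem key_lt_append_cons (x r : List SOrd) {a : SOrd} (ha : IsPos a) :
    key x < key (x ++ a :: r) :=
  key_lt_of_getElem? x.length (fun j hj => (List.getElem?_append_left hj).symm) <| by
    simpa [slot_none_lt_slot_some] using ha

theorem key_append_cons_lt (x r : List SOrd) {a : SOrd} (ha : ¬ IsPos a) :
    key (x ++ a :: r) < key x :=
  key_lt_of_getElem? x.length (fun j hj => List.getElem?_append_left hj) <| by
    simpa [slot_some_lt_slot_none] using ha

theorem key_append_cons_lt_append_cons (x r s : List SOrd) {a b : SOrd} (h : a < b) :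
    key (x ++ a :: r) < key (x ++ b :: s) :=
  key_lt_of_getElem? x.length
    (fun j hj => by rw [List.getElem?_append_left hj, List.getElem?_append_left hj]) <| by
    simpa [slot_some_lt_slot_some] using h

theorem key_append_singleton_lt_append_singleton (x : List SOrd) {a b : SOrd} :
    key (x ++ [a]) < key (x ++ [b]) ↔ a < b :=
  StrictMono.lt_iff_lt (f := fun c : SOrd => key (x ++ [c])) fun _ _ h =>
    key_append_cons_lt_append_cons x [] [] h

/-- The extensions of a sequence form an interval. -/
theorem isPrefix_of_key_le_of_key_le {w u v z : List SOrd} (hu : w <+: u) (hv : w <+: v)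
    (hzu : key u ≤ key z) (hzv : key z ≤ key v) : w <+: z := by
  have hu' : ∀ k < w.length, u[k]? = w[k]? := fun k hk => by
    rw [List.prefix_iff_getElem?.1 hu k hk, List.getElem?_eq_getElem hk]
  have hv' : ∀ k < w.length, v[k]? = w[k]? := fun k hk => by
    rw [List.prefix_iff_getElem?.1 hv k hk, List.getElem?_eq_getElem hk]
  have agree : ∀ j < w.length, z[j]? = w[j]? := by
    intro j
    induction j using Nat.strong_induction_on with
    | _ j ih =>
      intro hj
      have below : ∀ k < j, z[k]? = w[k]? := fun k hk => ih k hk (hk.trans hj)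
      apply slot_injective
      apply le_antisymm
      · rw [← hv' j hj]
        exact Pi.apply_le_of_toLex hzv fun k hk => by rw [below k hk, hv' k (hk.trans hj)]
      · rw [← hu' j hj]
        exact Pi.apply_le_of_toLex hzu fun k hk => by rw [below k hk, hu' k (hk.trans hj)]
  exact List.prefix_iff_getElem?.2 fun i hi => by rw [agree i hi, List.getElem?_eq_getElem hi]

theorem key_append_lt_of_not_prefix {x y : List SOrd} (h : key y < key x) (hyx : ¬ y <+: x)
    (r : List SOrd) : key (y ++ r) < key x :=
  lt_of_not_ge fun hle =>
    hyx (isPrefix_of_key_le_of_key_le (List.prefix_refl y) (List.prefix_append y r) h.le hle)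

theorem key_append_neg_zero_lt (z : List SOrd) : key (z ++ [neg 0]) < key z :=
  key_append_cons_lt z [] (not_isPos_neg 0)

theorem key_lt_append_neg_zero_or_prefix {p z : List SOrd} (h : key p < key z) :
    key p < key (z ++ [neg 0]) ∨ z ++ [neg 0] <+: p := by
  refine or_iff_not_imp_left.2 fun hle => ?_
  replace hle := not_lt.1 hle
  obtain ⟨r, rfl⟩ := isPrefix_of_key_le_of_key_le (List.prefix_append z _) (List.prefix_refl z)
    hle h.le
  rcases r with _ | ⟨c, s⟩
  · rw [List.append_nil] at h
    exact absurd h (lt_irrefl _)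
  obtain ⟨ξ, rfl⟩ := exists_eq_neg_of_not_isPos fun hc => (key_lt_append_cons z s hc).not_gt h
  obtain rfl | hξ := eq_or_ne ξ 0
  · exact ⟨s, by simp⟩
  · exact absurd hle (key_append_cons_lt_append_cons z s [] (neg_lt_neg_iff.2
      (pos_iff_ne_zero.2 hξ))).not_ge

section Lset

variable {δ γ : Ordinal}

theorem isBetween_neg_zero (hδ : δ ≠ 0) : IsBetween δ (neg 0) :=
  ⟨neg_lt_neg_iff.2 (pos_iff_ne_zero.2 hδ), neg_lt_pos _ _⟩

theorem isBetween_pos_zero (hδ : δ ≠ 0) : IsBetween δ (pos 0) :=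
  ⟨neg_lt_pos _ _, pos_lt_pos_iff.2 (pos_iff_ne_zero.2 hδ)⟩

theorem singleton_mem_Lset {α : Ordinal} (hα : α < γ) : [pos α] ∈ Lset δ γ :=
  ⟨List.cons_ne_nil _ _, ⟨by simp, α, hα, rfl⟩, fun k hk hk0 => by simp at hk; omega⟩

theorem append_mem_Lset {x : List SOrd} (hx : x ∈ Lset δ γ) {a : SOrd} (ha : IsBetween δ a) :
    x ++ [a] ∈ Lset δ γ := by
  obtain ⟨hne, ⟨h0, α, hα, hhead⟩, hbet⟩ := hx
  refine ⟨by simp, ⟨by simp, α, hα, by rwa [List.getElem_append_left h0]⟩, ?_⟩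
  intro k hk hk0
  rcases lt_or_ge k x.length with hkx | hkx
  · rw [List.getElem_append_left hkx]
    exact hbet k hkx hk0
  · obtain rfl : k = x.length := by simp at hk; omega
    simpa using ha

theorem mem_Lset_of_prefix {w x : List SOrd} (hx : x ∈ Lset δ γ) (hw : w <+: x) (hne : w ≠ []) :
    w ∈ Lset δ γ := by
  obtain ⟨-, ⟨_, α, hα, hhead⟩, hbet⟩ := hx
  have h0 : 0 < w.length := List.length_pos_iff.2 hne
  refine ⟨hne, ⟨h0, α, hα, by rw [hw.getElem h0, hhead]⟩, fun k hk hk0 => ?_⟩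
  rw [hw.getElem hk]
  exact hbet k _ hk0

theorem mem_Lbelow_iff {α : Ordinal} {z : List SOrd} :
    z ∈ Lbelow δ γ α ↔ z ∈ Lset δ γ ∧ key z < key [pos α] :=
  and_congr_right' llt_iff_key_lt

theorem mem_Jset_iff {x z : List SOrd} :
    z ∈ Jset δ γ x ↔ z ∈ Lset δ γ ∧ key x.dropLast ≤ key z ∧ key z < key x := by
  simp only [Jset, Set.mem_ofPred_eq, ← List.dropLast_eq_take, llt_iff_key_lt, le_iff_lt_or_eq,
    key_injective.eq_iff, eq_comm (a := z), or_comm]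
  exact Iff.rfl

end Lset

namespace Relevant

variable {δ γ τ : Ordinal} {S : Ordinal → Set Ordinal} {x : List SOrd}

theorem mem_Lset (hx : Relevant δ γ τ S x) : x ∈ Lset δ γ := hx.1

theorem isPos_getElem_iff (hx : Relevant δ γ τ S x) {i : ℕ} (hi : i < x.length) :
    IsPos x[i] ↔ i % 2 = 0 :=
  hx.2.2.2.1 i hi

theorem isPos_of_eq_append_cons (hx : Relevant δ γ τ S x) {b s : List SOrd} {c : SOrd}
    (h : x = b ++ c :: s) : IsPos c ↔ b.length % 2 = 0 := by
  subst h
  simpa using hx.isPos_getElem_iff (i := b.length) (by simp)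

theorem length_dropLast_mod_two (hx : Relevant δ γ τ S x) : x.dropLast.length % 2 = 0 := by
  have := hx.2.2.1
  rw [List.length_dropLast]
  omega

theorem two_le_length_dropLast (hx : Relevant δ γ τ S x) : 2 ≤ x.dropLast.length := by
  have := hx.2.1
  rw [List.length_dropLast]
  omega

theorem exists_eq_dropLast_append (hx : Relevant δ γ τ S x) :
    ∃ σ, x = x.dropLast ++ [pos σ] := by
  have hne : x ≠ [] := hx.mem_Lset.1
  have hlast : IsPos (x.getLast hne) := by
    rw [List.getLast_eq_getElem, hx.isPos_getElem_iff]
    have := hx.2.2.1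
    omega
  obtain ⟨σ, hσ⟩ := hlast
  exact ⟨σ, by rw [← hσ, List.dropLast_append_getLast]⟩

theorem dropLast_mem_Lset (hx : Relevant δ γ τ S x) : x.dropLast ∈ Lset δ γ :=
  mem_Lset_of_prefix hx.mem_Lset (List.dropLast_prefix x) <| by
    have := hx.two_le_length_dropLast
    rintro h
    simp [h] at this

theorem key_dropLast_lt_append (hx : Relevant δ γ τ S x) (r : List SOrd) :
    key x.dropLast < key (x ++ r) := by
  obtain ⟨σ, hσ⟩ := hx.exists_eq_dropLast_append
  have : x ++ r = x.dropLast ++ pos σ :: r := by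
    conv_lhs => rw [hσ]
    simp
  rw [this]
  exact key_lt_append_cons _ r (isPos_pos σ)

theorem key_dropLast_lt (hx : Relevant δ γ τ S x) : key x.dropLast < key x := by
  simpa using hx.key_dropLast_lt_append []

theorem dropLast_mem_Jset (hx : Relevant δ γ τ S x) : x.dropLast ∈ Jset δ γ x :=
  mem_Jset_iff.2 ⟨hx.dropLast_mem_Lset, le_rfl, hx.key_dropLast_lt⟩

/-- A sequence of length one never lies in `J_x`, whatever its entry. -/
theorem key_singleton_lt_dropLast (hx : Relevant δ γ τ S x) {a : SOrd} (h : key [a] < key x) :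
    key [a] < key x.dropLast := by
  refine lt_of_not_ge fun hle => ?_
  have := (isPrefix_of_key_le_of_key_le (List.prefix_refl _) (List.dropLast_prefix x) hle
    h.le).length_le
  have := hx.two_le_length_dropLast
  rw [List.length_singleton] at *
  omega

end Relevant

section Laminar

variable {δ γ τ : Ordinal} {S : Ordinal → Set Ordinal}

theorem key_singleton_pos_lt_iff {α β : Ordinal} : key [pos α] < key [pos β] ↔ α < β :=
  (key_append_singleton_lt_append_singleton []).trans pos_lt_pos_iff

theorem key_singleton_pos_le_iff {α β : Ordinal} : key [pos α] ≤ key [pos β] ↔ α ≤ β :=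
  StrictMono.le_iff_le (f := fun c => key [pos c]) fun _ _ => key_singleton_pos_lt_iff.2

theorem Lbelow_subset_Lbelow {α β : Ordinal} (h : α ≤ β) : Lbelow δ γ α ⊆ Lbelow δ γ β :=
  fun _ hz => mem_Lbelow_iff.2 ⟨(mem_Lbelow_iff.1 hz).1,
    (mem_Lbelow_iff.1 hz).2.trans_le (key_singleton_pos_le_iff.2 h)⟩

theorem Jset_subset_Lbelow_or_disjoint {x : List SOrd} (hx : Relevant δ γ τ S x) (α : Ordinal) :
    Jset δ γ x ⊆ Lbelow δ γ α ∨ Disjoint (Jset δ γ x) (Lbelow δ γ α) := by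
  rcases le_or_gt (key x) (key [pos α]) with h | h
  · exact .inl fun z hz => mem_Lbelow_iff.2 ⟨(mem_Jset_iff.1 hz).1,
      (mem_Jset_iff.1 hz).2.2.trans_le h⟩
  · refine .inr (Set.disjoint_left.2 fun z hz hz' => ?_)
    exact ((mem_Lbelow_iff.1 hz').2.trans (hx.key_singleton_lt_dropLast h)).not_ge
      (mem_Jset_iff.1 hz).2.1

theorem Jset_laminar {x y : List SOrd} (hx : Relevant δ γ τ S x) (hy : Relevant δ γ τ S y) :
    Jset δ γ x ⊆ Jset δ γ y ∨ Jset δ γ y ⊆ Jset δ γ x ∨ Disjoint (Jset δ γ x) (Jset δ γ y) := by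
  wlog hle : key x.dropLast ≤ key y.dropLast generalizing x y
  · rcases this hy hx (le_of_not_ge hle) with h | h | h
    exacts [.inr (.inl h), .inl h, .inr (.inr h.symm)]
  rcases hle.lt_or_eq with hlt | heq
  swap
  · rcases le_total (key x) (key y) with hxy | hyx
    · exact .inl fun z hz => by
        rw [mem_Jset_iff] at hz ⊢
        exact ⟨hz.1, heq ▸ hz.2.1, hz.2.2.trans_le hxy⟩
    · exact .inr (.inl fun z hz => by
        rw [mem_Jset_iff] at hz ⊢
        exact ⟨hz.1, heq ▸ hz.2.1, hz.2.2.trans_le hyx⟩)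
  rcases le_or_gt (key x) (key y.dropLast) with hxb | hbx
  · refine .inr (.inr (Set.disjoint_left.2 fun z hz hz' => ?_))
    exact ((mem_Jset_iff.1 hz).2.2.trans_le hxb).not_ge (mem_Jset_iff.1 hz').2.1
  rcases le_or_gt (key y) (key x) with hyx | hxy
  · exact .inr (.inl fun z hz => by
      rw [mem_Jset_iff] at hz ⊢
      exact ⟨hz.1, hlt.le.trans hz.2.1, hz.2.2.trans_le hyx⟩)
  -- `y.dropLast < x < y` forces `x` to extend `y.dropLast`, at an even position, hence
  -- positively, contradicting `x.dropLast < y.dropLast`.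
  exfalso
  obtain ⟨σ, hσ⟩ := hx.exists_eq_dropLast_append
  have hpre := isPrefix_of_key_le_of_key_le (List.prefix_refl _) (List.dropLast_prefix y) hbx.le
    hxy.le
  rw [hσ, List.prefix_concat_iff, ← hσ] at hpre
  rcases hpre with heq | ⟨_ | ⟨c, s⟩, hr⟩
  · exact absurd (heq ▸ hbx) (lt_irrefl _)
  · rw [List.append_nil] at hr
    exact absurd (hr ▸ hlt) (lt_irrefl _)
  · have hc : IsPos c := (hx.isPos_of_eq_append_cons (s := s ++ [pos σ]) (by rw [hσ, ← hr]; simp)).2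
      hy.length_dropLast_mod_two
    exact (hr ▸ key_lt_append_cons _ s hc).not_gt hlt

theorem IsBasic.laminar {B C : Set (List SOrd)} (hB : IsBasic δ γ τ S B)
    (hC : IsBasic δ γ τ S C) : B ⊆ C ∨ C ⊆ B ∨ Disjoint B C := by
  have subset_or_disjoint (B : Set (List SOrd)) (w : List SOrd) : {w} ⊆ B ∨ Disjoint B {w} :=
    (em (w ∈ B)).imp Set.singleton_subset_iff.2 Set.disjoint_singleton_right.2
  rcases hB with ⟨α, -, rfl⟩ | ⟨x, hx, rfl⟩ | ⟨z, -, rfl⟩ <;>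
    rcases hC with ⟨β, -, rfl⟩ | ⟨y, hy, rfl⟩ | ⟨w, -, rfl⟩
  · exact (le_total α β).imp Lbelow_subset_Lbelow (fun h => .inl (Lbelow_subset_Lbelow h))
  · exact .inr ((Jset_subset_Lbelow_or_disjoint hy α).imp id fun h => h.symm)
  · exact .inr (subset_or_disjoint _ w)
  · exact (Jset_subset_Lbelow_or_disjoint hx β).imp id .inr
  · exact Jset_laminar hx hy
  · exact .inr (subset_or_disjoint _ w)
  all_goals exact (subset_or_disjoint _ z).imp id fun h => .inr h.symm

end Laminar

section Unsplittable

variable {δ γ τ : Ordinal} {S : Ordinal → Set Ordinal}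

theorem Lbelow_nonempty (hδ : δ ≠ 0) (hγ : γ ≠ 0) (α : Ordinal) : (Lbelow δ γ α).Nonempty :=
  ⟨[pos 0] ++ [neg 0], mem_Lbelow_iff.2
    ⟨append_mem_Lset (singleton_mem_Lset (pos_iff_ne_zero.2 hγ)) (isBetween_neg_zero hδ),
      (key_append_neg_zero_lt _).trans_le (key_singleton_pos_le_iff.2 zero_le)⟩⟩

theorem append_neg_zero_mem_Lbelow (hδ : δ ≠ 0) {α : Ordinal} {z : List SOrd}
    (hz : z ∈ Lbelow δ γ α) : z ++ [neg 0] ∈ Lbelow δ γ α :=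
  mem_Lbelow_iff.2 ⟨append_mem_Lset (mem_Lbelow_iff.1 hz).1 (isBetween_neg_zero hδ),
    (key_append_neg_zero_lt z).trans (mem_Lbelow_iff.1 hz).2⟩

theorem Lbelow_not_subset_Jset (hδ : δ ≠ 0) {x : List SOrd} (hx : Relevant δ γ τ S x)
    {β : Ordinal} {z : List SOrd} (hz : z ∈ Lbelow δ γ β) : ¬ Lbelow δ γ β ⊆ Jset δ γ x := by
  intro hsub
  have ht : x.dropLast ∈ Lbelow δ γ β := mem_Lbelow_iff.2 ⟨hx.dropLast_mem_Lset,
    (mem_Jset_iff.1 (hsub hz)).2.1.trans_lt (mem_Lbelow_iff.1 hz).2⟩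
  exact (key_append_neg_zero_lt _).not_ge
    (mem_Jset_iff.1 (hsub (append_neg_zero_mem_Lbelow hδ ht))).2.1

theorem IsBasic.exists_min_inter {P G : Set (List SOrd)} (hP : IsBasic δ γ τ S P)
    (hGP : (G ∩ P).Nonempty) (hL : ∀ α, P = Lbelow δ γ α → Disjoint G P)
    (hJ : ∀ y, Relevant δ γ τ S y → P = Jset δ γ y → y.dropLast ∈ G) :
    ∃ m ∈ G ∩ P, ∀ q ∈ G ∩ P, key m ≤ key q := by
  rcases hP with ⟨α, -, rfl⟩ | ⟨y, hy, rfl⟩ | ⟨w, -, rfl⟩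
  · exact absurd (hL α rfl) (Set.not_disjoint_iff_nonempty_inter.2 hGP)
  · exact ⟨y.dropLast, ⟨hJ y hy rfl, hy.dropLast_mem_Jset⟩,
      fun q hq => (mem_Jset_iff.1 hq.2).2.1⟩
  · obtain ⟨z, hzG, rfl⟩ := hGP
    exact ⟨z, ⟨hzG, rfl⟩, fun q hq => (congrArg key (Set.mem_singleton_iff.1 hq.2)).ge⟩

theorem key_lt_dropLast_of_singleton_mem {F : Finset (Set (List SOrd))}
    (hdisj : (F : Set (Set (List SOrd))).Pairwise Disjoint) {p y z : List SOrd} (hp : {p} ∈ F)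
    (hpL : p ∈ Lset δ γ) (hy : Jset δ γ y ∈ F) (hz : z ∈ Jset δ γ y) (hpz : key p < key z) :
    key p < key y.dropLast := by
  refine lt_of_not_ge fun hle => ?_
  have hpJ : p ∈ Jset δ γ y := mem_Jset_iff.2 ⟨hpL, hle, hpz.trans (mem_Jset_iff.1 hz).2.2⟩
  have hne : Jset δ γ y ≠ {p} := fun h =>
    hpz.ne' (congrArg key (Set.mem_singleton_iff.1 (h ▸ hz)))
  exact Set.disjoint_left.1 (hdisj hy hp hne) hpJ rfl

/-- Above `p`, every piece has a least element: a piece `J_y` its left end `y.dropLast`, which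
cannot lie below `p` since `{p}` is a piece of its own. -/
theorem exists_min_above_singleton_mem {B : Set (List SOrd)} {F : Finset (Set (List SOrd))}
    (hF : ∀ P ∈ F, IsBasic δ γ τ S P) (hdisj : (F : Set (Set (List SOrd))).Pairwise Disjoint)
    (hsub : ∀ P ∈ F, P ⊆ B) (hB : B ⊆ ⋃ P ∈ F, P) {p : List SOrd} (hpF : {p} ∈ F)
    (hpL : p ∈ Lset δ γ) (hL : ∀ P ∈ F, ∀ α, P = Lbelow δ γ α → ∀ z ∈ P, key z ≤ key p)
    (hne : ∃ z ∈ B, key p < key z) :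
    ∃ m ∈ B, key p < key m ∧ ∀ q ∈ B, key p < key q → key m ≤ key q := by
  obtain ⟨m, ⟨hmB, hpm⟩, hmin⟩ := exists_forall_le_of_finite_cover key F
    (G := {z ∈ B | key p < key z}) hne (fun z hz => hB hz.1) fun P hP hGP =>
      (hF P hP).exists_min_inter hGP
        (fun α hα => Set.disjoint_left.2 fun z hz hzP => (hL P hP α hα z hzP).not_gt hz.2)
        fun y hy hPy => by
          obtain ⟨z, hzG, hzP⟩ := hGP
          subst hPy
          exact ⟨hsub _ hP hy.dropLast_mem_Jset,
            key_lt_dropLast_of_singleton_mem hdisj hpF hpL hP hzP hzG.2⟩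
  exact ⟨m, hmB, hpm, fun q hq hpq => hmin q ⟨hq, hpq⟩⟩

theorem Lbelow_eq_of_mem (hδ : δ ≠ 0) (hγ : γ ≠ 0) {F : Finset (Set (List SOrd))}
    (hdisj : (F : Set (Set (List SOrd))).Pairwise Disjoint) {β β' : Ordinal}
    (hβ : Lbelow δ γ β ∈ F) (hβ' : Lbelow δ γ β' ∈ F) : Lbelow δ γ β' = Lbelow δ γ β := by
  by_contra hne
  obtain ⟨z, hz⟩ := Lbelow_nonempty hδ hγ (min β β')
  exact Set.disjoint_left.1 (hdisj hβ' hβ hne) (Lbelow_subset_Lbelow (min_le_right _ _) hz)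
    (Lbelow_subset_Lbelow (min_le_left _ _) hz)

theorem singleton_mem_of_Lbelow_mem (hδ : δ ≠ 0) (hγ : γ ≠ 0) {α : Ordinal} (hα : α ≤ γ)
    {F : Finset (Set (List SOrd))} (hF : ∀ P ∈ F, IsBasic δ γ τ S P)
    (hdisj : (F : Set (Set (List SOrd))).Pairwise Disjoint) (hsub : ∀ P ∈ F, P ⊂ Lbelow δ γ α)
    (hB : Lbelow δ γ α ⊆ ⋃ P ∈ F, P) {β : Ordinal} (hβ : Lbelow δ γ β ∈ F) :
    β < α ∧ {[pos β]} ∈ F := by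
  have hβα : β < α := lt_of_not_ge fun h => (hsub _ hβ).not_subset (Lbelow_subset_Lbelow h)
  refine ⟨hβα, ?_⟩
  obtain ⟨P, hP, hpP⟩ := Set.mem_iUnion₂.1 (hB (mem_Lbelow_iff.2
    ⟨singleton_mem_Lset (hβα.trans_le hα), key_singleton_pos_lt_iff.2 hβα⟩))
  rcases hF P hP with ⟨β', -, rfl⟩ | ⟨y, hy, rfl⟩ | ⟨w, -, rfl⟩
  · rw [Lbelow_eq_of_mem hδ hγ hdisj hβ hP] at hpP
    exact absurd (mem_Lbelow_iff.1 hpP).2 (lt_irrefl _)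
  · have := mem_Jset_iff.1 hpP
    exact absurd (hy.key_singleton_lt_dropLast this.2.2) this.2.1.not_gt
  · rwa [Set.mem_singleton_iff.1 hpP]

theorem Lbelow_ne_biUnion_ssubset (hδ : δ ≠ 0) (hγ : γ ≠ 0) {α : Ordinal} (hα : α ≤ γ)
    {F : Finset (Set (List SOrd))} (hF : ∀ P ∈ F, IsBasic δ γ τ S P)
    (hdisj : (F : Set (Set (List SOrd))).Pairwise Disjoint) (hsub : ∀ P ∈ F, P ⊂ Lbelow δ γ α) :
    Lbelow δ γ α ≠ ⋃ P ∈ F, P := by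
  intro hB
  by_cases hL : ∃ β, Lbelow δ γ β ∈ F
  swap
  · obtain ⟨m, hmB, hmin⟩ := exists_forall_le_of_finite_cover key F (Lbelow_nonempty hδ hγ α)
      hB.subset fun P hP hGP => (hF P hP).exists_min_inter hGP
        (fun β hPβ => absurd ⟨β, hPβ ▸ hP⟩ hL)
        fun y hy hPy => (hsub P hP).subset (hPy ▸ hy.dropLast_mem_Jset)
    exact (key_append_neg_zero_lt m).not_ge (hmin _ (append_neg_zero_mem_Lbelow hδ hmB))
  obtain ⟨β, hβ⟩ := hL
  obtain ⟨hβα, hpF⟩ := singleton_mem_of_Lbelow_mem hδ hγ hα hF hdisj hsub hB.subset hβ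
  have hpL : [pos β] ∈ Lset δ γ := singleton_mem_Lset (hβα.trans_le hα)
  obtain ⟨m, hmB, hpm, hmin⟩ := exists_min_above_singleton_mem hF hdisj
    (fun P hP => (hsub P hP).subset) hB.subset hpF hpL
    (fun P hP β' hPβ' z hz => by
      rw [hPβ', Lbelow_eq_of_mem hδ hγ hdisj hβ (hPβ' ▸ hP)] at hz
      exact (mem_Lbelow_iff.1 hz).2.le)
    ⟨[pos β] ++ [pos 0], mem_Lbelow_iff.2 ⟨append_mem_Lset hpL (isBetween_pos_zero hδ),
      key_append_cons_lt_append_cons [] [pos 0] [] (pos_lt_pos_iff.2 hβα)⟩,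
      key_lt_append_cons _ [] (isPos_pos 0)⟩
  rcases key_lt_append_neg_zero_or_prefix hpm with h | h
  · exact (key_append_neg_zero_lt m).not_ge (hmin _ (append_neg_zero_mem_Lbelow hδ hmB) h)
  · have := h.length_le
    simp only [List.length_append, List.length_singleton] at this
    exact (mem_Lbelow_iff.1 hmB).1.1 (List.eq_nil_of_length_eq_zero (by omega))

theorem append_neg_zero_mem_Jset (hδ : δ ≠ 0) {x p z : List SOrd} {σ : Ordinal}
    (hp : p <+: x.dropLast ++ [pos σ])
    (hpJ : key x.dropLast ≤ key p) (hz : z ∈ Jset δ γ x) (hpz : key p < key z) :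
    z ++ [neg 0] ∈ Jset δ γ x ∧ key p < key (z ++ [neg 0]) := by
  obtain ⟨hzL, -, hzx⟩ := mem_Jset_iff.1 hz
  rcases key_lt_append_neg_zero_or_prefix hpz with h | h
  · exact ⟨mem_Jset_iff.2 ⟨append_mem_Lset hzL (isBetween_neg_zero hδ),
      hpJ.trans h.le, (key_append_neg_zero_lt z).trans hzx⟩, h⟩
  exfalso
  rcases List.prefix_concat_iff.1 (h.trans hp) with heq | hpre
  · exact (neg_lt_pos 0 σ).ne (by simpa using congrArg List.getLast? heq)
  · obtain ⟨r, hr⟩ := hpre.trans (List.dropLast_prefix x)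
    rw [← hr, List.append_assoc, List.singleton_append] at hzx
    exact (key_append_cons_lt z r (not_isPos_neg 0)).not_gt hzx

theorem singleton_mem_of_dropLast_eq (hδ : δ ≠ 0) {x y : List SOrd} (hx : Relevant δ γ τ S x)
    (hy : Relevant δ γ τ S y) {F : Finset (Set (List SOrd))} (hF : ∀ P ∈ F, IsBasic δ γ τ S P)
    (hdisj : (F : Set (Set (List SOrd))).Pairwise Disjoint) (hsub : ∀ P ∈ F, P ⊂ Jset δ γ x)
    (hB : Jset δ γ x ⊆ ⋃ P ∈ F, P) (hyF : Jset δ γ y ∈ F) (hty : y.dropLast = x.dropLast) :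
    {y} ∈ F ∧ y ∈ Jset δ γ x := by
  have hyx : key y < key x := lt_of_not_ge fun hxy => (hsub _ hyF).not_subset fun z hz => by
    rw [mem_Jset_iff] at hz ⊢
    exact ⟨hz.1, hty ▸ hz.2.1, hz.2.2.trans_le hxy⟩
  have hyJ : y ∈ Jset δ γ x := mem_Jset_iff.2 ⟨hy.mem_Lset, hty ▸ hy.key_dropLast_lt.le, hyx⟩
  refine ⟨?_, hyJ⟩
  obtain ⟨P, hP, hyP⟩ := Set.mem_iUnion₂.1 (hB hyJ)
  rcases hF P hP with ⟨β, -, rfl⟩ | ⟨y', hy', rfl⟩ | ⟨w, -, rfl⟩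
  · exact absurd (hsub _ hP).subset (Lbelow_not_subset_Jset hδ hx hyP)
  · exfalso
    obtain ⟨-, hle, -⟩ := mem_Jset_iff.1 hyP
    rcases hle.lt_or_eq with hlt | heq
    · have ht'x := mem_Jset_iff.1 ((hsub _ hP).subset hy'.dropLast_mem_Jset)
      have ht'y : y'.dropLast ∈ Jset δ γ y := mem_Jset_iff.2 ⟨ht'x.1, hty ▸ ht'x.2.1, hlt⟩
      have hne : Jset δ γ y' ≠ Jset δ γ y := fun h => lt_irrefl _ (mem_Jset_iff.1 (h ▸ hyP)).2.2
      exact Set.disjoint_left.1 (hdisj hP hyF hne) hy'.dropLast_mem_Jset ht'y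
    · -- `y'.dropLast` has even length and `y` odd length.
      have := congrArg List.length (key_injective heq)
      have := hy'.length_dropLast_mod_two
      have := hy.length_dropLast_mod_two
      have := hy.two_le_length_dropLast
      simp only [List.length_dropLast] at *
      omega
  · rwa [Set.mem_singleton_iff.1 hyP]

/-- The piece containing `x.dropLast` is either `{x.dropLast}` or some `J_y` with
`y.dropLast = x.dropLast`, and in the latter case `{y}` is a piece. -/
theorem exists_singleton_mem_of_Jset_subset (hδ : δ ≠ 0) {x : List SOrd}
    (hx : Relevant δ γ τ S x) {F : Finset (Set (List SOrd))} (hF : ∀ P ∈ F, IsBasic δ γ τ S P)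
    (hdisj : (F : Set (Set (List SOrd))).Pairwise Disjoint) (hsub : ∀ P ∈ F, P ⊂ Jset δ γ x)
    (hB : Jset δ γ x ⊆ ⋃ P ∈ F, P) :
    ∃ p σ, {p} ∈ F ∧ p ∈ Jset δ γ x ∧ p <+: x.dropLast ++ [pos σ] ∧
      ∃ z ∈ Jset δ γ x, key p < key z := by
  obtain ⟨P, hP, htP⟩ := Set.mem_iUnion₂.1 (hB hx.dropLast_mem_Jset)
  rcases hF P hP with ⟨β, -, rfl⟩ | ⟨y, hy, rfl⟩ | ⟨w, -, rfl⟩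
  · exact absurd (hsub _ hP).subset (Lbelow_not_subset_Jset hδ hx htP)
  · have hty : y.dropLast = x.dropLast := key_injective <| le_antisymm (mem_Jset_iff.1 htP).2.1
      (mem_Jset_iff.1 ((hsub _ hP).subset hy.dropLast_mem_Jset)).2.1
    obtain ⟨hyF, hyJ⟩ := singleton_mem_of_dropLast_eq hδ hx hy hF hdisj hsub hB hP hty
    obtain ⟨σ', hσ'⟩ := hy.exists_eq_dropLast_append
    refine ⟨y, σ', hyF, hyJ, by rw [← hty, ← hσ'], y ++ [pos 0], mem_Jset_iff.2
      ⟨append_mem_Lset hy.mem_Lset (isBetween_pos_zero hδ), ?_, ?_⟩,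
      key_lt_append_cons y [] (isPos_pos 0)⟩
    · rw [← hty]
      exact (hy.key_dropLast_lt_append _).le
    · refine key_append_lt_of_not_prefix (mem_Jset_iff.1 hyJ).2.2 (fun h => ?_) _
      have hlen : y.length = x.length := by
        have := congrArg List.length hty
        have := hy.two_le_length_dropLast
        simp only [List.length_dropLast] at *
        omega
      exact (lt_irrefl (key x)) (h.eq_of_length hlen ▸ (mem_Jset_iff.1 hyJ).2.2)
  · obtain rfl := Set.mem_singleton_iff.1 htP
    have hlt := hx.key_dropLast_lt_append [neg 0]
    refine ⟨_, 0, hP, hx.dropLast_mem_Jset, List.prefix_append _ _, x ++ [neg 0], mem_Jset_iff.2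
      ⟨append_mem_Lset hx.mem_Lset (isBetween_neg_zero hδ), hlt.le,
        key_append_neg_zero_lt x⟩, hlt⟩

theorem Jset_ne_biUnion_ssubset (hδ : δ ≠ 0) {x : List SOrd} (hx : Relevant δ γ τ S x)
    {F : Finset (Set (List SOrd))} (hF : ∀ P ∈ F, IsBasic δ γ τ S P)
    (hdisj : (F : Set (Set (List SOrd))).Pairwise Disjoint) (hsub : ∀ P ∈ F, P ⊂ Jset δ γ x) :
    Jset δ γ x ≠ ⋃ P ∈ F, P := by
  intro hB
  obtain ⟨p, σ, hpF, hpJ, hp, hne⟩ :=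
    exists_singleton_mem_of_Jset_subset hδ hx hF hdisj hsub hB.subset
  obtain ⟨m, hmJ, hpm, hmin⟩ := exists_min_above_singleton_mem hF hdisj
    (fun P hP => (hsub P hP).subset) hB.subset hpF (mem_Jset_iff.1 hpJ).1
    (fun P hP β hPβ z hz =>
      absurd (hsub P hP).subset (hPβ ▸ Lbelow_not_subset_Jset hδ hx (hPβ ▸ hz)))
    hne
  obtain ⟨hm', hpm'⟩ := append_neg_zero_mem_Jset hδ hp (mem_Jset_iff.1 hpJ).2.1 hmJ hpm
  exact (key_append_neg_zero_lt m).not_ge (hmin _ hm' hpm')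

theorem IsBasic.ne_biUnion_ssubset (hδ : δ ≠ 0) (hγ : γ ≠ 0) {B : Set (List SOrd)}
    (hB : IsBasic δ γ τ S B) (F : Finset (Set (List SOrd))) (hF : ∀ P ∈ F, IsBasic δ γ τ S P)
    (hdisj : (F : Set (Set (List SOrd))).Pairwise Disjoint) (hsub : ∀ P ∈ F, P ⊂ B) :
    B ≠ ⋃ P ∈ F, P := by
  rcases hB with ⟨α, hα, rfl⟩ | ⟨x, hx, rfl⟩ | ⟨z, -, rfl⟩
  · exact Lbelow_ne_biUnion_ssubset hδ hγ hα hF hdisj hsub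
  · exact Jset_ne_biUnion_ssubset hδ hx hF hdisj hsub
  · intro hB
    obtain ⟨P, hP, hzP⟩ := Set.mem_iUnion₂.1 (hB ▸ Set.mem_singleton z)
    exact (hsub P hP).ne ((hsub P hP).subset.antisymm (Set.singleton_subset_iff.2 hzP))

end Unsplittable

theorem Ifam_unique_disjoint_decomposition_general (δ γ τ : Ordinal) (hδ : δ ≠ 0) (hγ : γ ≠ 0)
    (S : Ordinal → Set Ordinal) :
    (∀ A ∈ Ifam δ γ τ S, ∃ E : Finset (Set (List SOrd)),
        (∀ B ∈ E, IsBasic δ γ τ S B) ∧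
        (E : Set (Set (List SOrd))).Pairwise Disjoint ∧
        A = ⋃ B ∈ E, (B : Set (List SOrd))) ∧
    (∀ E E' : Finset (Set (List SOrd)),
        (∀ B ∈ E, IsBasic δ γ τ S B) → (E : Set (Set (List SOrd))).Pairwise Disjoint →
        (∀ B ∈ E', IsBasic δ γ τ S B) → (E' : Set (Set (List SOrd))).Pairwise Disjoint →
        (⋃ B ∈ E, (B : Set (List SOrd))) = ⋃ B ∈ E', (B : Set (List SOrd)) →
        E = E') := by
  have hlam : ∀ ⦃B C⦄, IsBasic δ γ τ S B → IsBasic δ γ τ S C → B ⊆ C ∨ C ⊆ B ∨ Disjoint B C :=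
    fun _ _ => IsBasic.laminar
  refine ⟨?_, fun E E' hE hdE hE' hdE' h =>
    eq_of_biUnion_eq_of_laminar hlam (fun _ => IsBasic.ne_biUnion_ssubset hδ hγ) hE hdE hE' hdE' h⟩
  rintro A ⟨E, hE, rfl⟩
  obtain ⟨E', hE'E, hdE', hU⟩ := exists_pairwise_disjoint_subfamily_of_laminar hlam E hE
  exact ⟨E', fun B hB => hE B (hE'E hB), hdE', hU.symm⟩

/-- Every member of `I^{Σ,γ}` is a union of a finite family of pairwise disjoint
basic sets, and this family is unique: if `E` and `E'` are finite sets of pairwise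
disjoint basic sets with `⋃E = ⋃E'`, then `E = E'`. -/
theorem Ifam_unique_disjoint_decomposition (δ γ τ : Ordinal) (hδ : δ ≠ 0) (hγ : γ ≠ 0)
    (S : Ordinal → Set Ordinal) (hS : IsPartition δ τ S) :
    (∀ A ∈ Ifam δ γ τ S, ∃ E : Finset (Set (List SOrd)),
        (∀ B ∈ E, IsBasic δ γ τ S B) ∧
        (E : Set (Set (List SOrd))).Pairwise Disjoint ∧
        A = ⋃ B ∈ E, (B : Set (List SOrd))) ∧
    (∀ E E' : Finset (Set (List SOrd)),
        (∀ B ∈ E, IsBasic δ γ τ S B) → (E : Set (Set (List SOrd))).Pairwise Disjoint →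
        (∀ B ∈ E', IsBasic δ γ τ S B) → (E' : Set (Set (List SOrd))).Pairwise Disjoint →
        (⋃ B ∈ E, (B : Set (List SOrd))) = ⋃ B ∈ E', (B : Set (List SOrd)) →
        E = E') :=
  Ifam_unique_disjoint_decomposition_general δ γ τ hδ hγ S
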